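/- For every integer k ≥ 3 there is a constant c(k) > 0 with the following property: if P is a finite set of points in general position in the plane with |P| ≥ k, then there are k subsets P_1, P_2, …, P_k ⊆ P with pairwise disjoint convex hulls and |P_1| = |P_2| = … = |P_k| ≥ c(k)·|P|, such that (P_1, …, P_k) has same-type transversals. -/

import Mathlib

/-!
If every part `Q i` is strictly separated by a line from `Q j ∪ Q l` whenever `i ≠ j, l`, then no
line meets three of the convex hulls, so the orientation determinant has no zero on the product
of three hulls; this product is connected, hence all transversals have the same order type.

Separating one triple costs a constant factor: the line through centerpoints (Helly) of `Q i` and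
`Q j` leaves a third of each strictly on either side, since general position puts at most two
points on it, and it can be oriented so that the side of `Q j` also holds half of `Q l`. Doing
this for all `k ^ 3` triples of indices, starting from `k` copies of `P`, and finally trimming
all parts to the smallest one gives the theorem with `c(k) = 1 / (6 * 3 ^ k ^ 3)`.
-/

/-- The orientation (±1, or 0 for degenerate triples) of an ordered triple of points in the
plane. -/
noncomputable def orient (p q r : ℝ × ℝ) : ℝ :=
  Real.sign ((q.1 - p.1) * (r.2 - p.2) - (q.2 - p.2) * (r.1 - p.1))

/-- A set of points in the plane is in general position if no three of its points are
collinear. -/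
def InGeneralPosition (S : Set (ℝ × ℝ)) : Prop :=
  ∀ p ∈ S, ∀ q ∈ S, ∀ r ∈ S, p ≠ q → p ≠ r → q ≠ r →
    ¬ Collinear ℝ ({p, q, r} : Set (ℝ × ℝ))

/-- `(P 0, …, P (k−1))` has same-type transversals: any two transversals have the same order
type, i.e. every triple of indices receives the same orientation in all transversals. -/
def SameTypeTransversals {k : ℕ} (P : Fin k → Finset (ℝ × ℝ)) : Prop :=
  ∀ f g : Fin k → ℝ × ℝ, (∀ i, f i ∈ P i) → (∀ i, g i ∈ P i) →
    ∀ i j l : Fin k, i < j → j < l →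
      orient (f i) (f j) (f l) = orient (g i) (g j) (g l)


open Finset

def StrictlySeparated {E : Type*} [AddCommGroup E] [Module ℝ E] (A B : Set E) : Prop :=
  ∃ (f : E →ₗ[ℝ] ℝ) (c : ℝ), (∀ x ∈ A, f x < c) ∧ ∀ x ∈ B, c < f x

namespace StrictlySeparated

variable {E : Type*} [AddCommGroup E] [Module ℝ E] {A B A' B' : Set E}

theorem mono (h : StrictlySeparated A B) (hA : A' ⊆ A) (hB : B' ⊆ B) :
    StrictlySeparated A' B' :=
  let ⟨f, c, hfA, hfB⟩ := h
  ⟨f, c, fun x hx => hfA x (hA hx), fun x hx => hfB x (hB hx)⟩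

theorem convexHull (h : StrictlySeparated A B) :
    StrictlySeparated (convexHull ℝ A) (convexHull ℝ B) :=
  let ⟨f, c, hfA, hfB⟩ := h
  ⟨f, c, fun _ hx => convexHull_min hfA (convex_halfSpace_lt f.isLinear c) hx,
    fun _ hx => convexHull_min hfB (convex_halfSpace_gt f.isLinear c) hx⟩

theorem disjoint (h : StrictlySeparated A B) : Disjoint A B :=
  let ⟨_, _, hfA, hfB⟩ := h
  Set.disjoint_left.2 fun x hxA hxB => (hfA x hxA).asymm (hfB x hxB)

theorem notMem_segment {C : Set E} {a b c : E} (h : StrictlySeparated A (B ∪ C)) (ha : a ∈ A)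
    (hb : b ∈ B) (hc : c ∈ C) : a ∉ segment ℝ b c := fun habc =>
  Set.disjoint_left.1 h.convexHull.disjoint (subset_convexHull ℝ A ha)
    (segment_subset_convexHull (Set.mem_union_left C hb) (Set.mem_union_right B hc) habc)

end StrictlySeparated

theorem Finset.exists_mem_forall_mem_of_sum_card_sdiff_lt {α : Type*} [DecidableEq α]
    {A : Finset α} {I : Finset (Finset α)} (h : ∑ S ∈ I, #(A \ S) < #A) :
    ∃ x ∈ A, ∀ S ∈ I, x ∈ S := by
  obtain ⟨x, hxA, hx⟩ := not_subset.1 fun hA : A ⊆ I.biUnion (A \ ·) =>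
    (card_le_card hA |>.trans card_biUnion_le).not_gt h
  exact ⟨x, hxA, fun S hS =>
    by_contra fun hxS => hx (mem_biUnion.2 ⟨S, hS, mem_sdiff.2 ⟨hxA, hxS⟩⟩)⟩

/-- Helly's theorem applied to the convex hulls of all subsets of `A` with more than
`d / (d + 1)` of its points, `d` the dimension. -/
theorem exists_centerpoint {E : Type*} [AddCommGroup E] [Module ℝ E] [FiniteDimensional ℝ E]
    (A : Finset E) :
    ∃ q : E, ∀ (f : E →ₗ[ℝ] ℝ) (c : ℝ), f q ≤ c →
      #A ≤ (Module.finrank ℝ E + 1) * #{x ∈ A | f x ≤ c} := by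
  classical
  set d := Module.finrank ℝ E
  set s := A.powerset.filter fun S => d * #A < (d + 1) * #S
  have hlarge : ∀ S ∈ s, S ⊆ A ∧ (d + 1) * #(A \ S) < #A := by
    intro S hS
    obtain ⟨hSA, hS⟩ := mem_filter.1 hS
    have hsplit := card_sdiff_add_card_eq_card (mem_powerset.1 hSA)
    exact ⟨mem_powerset.1 hSA, by nlinarith⟩
  obtain ⟨q, hq⟩ : (⋂ S ∈ s, convexHull ℝ (S : Set E)).Nonempty := by
    refine Convex.helly_theorem' (fun S _ => convex_convexHull ℝ _) fun I hIs hI => ?_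
    rcases I.eq_empty_or_nonempty with rfl | hIne
    · simp
    have hsum : (d + 1) * ∑ S ∈ I, #(A \ S) < (d + 1) * #A := by
      calc (d + 1) * ∑ S ∈ I, #(A \ S) = ∑ S ∈ I, (d + 1) * #(A \ S) := mul_sum _ _ _
        _ < ∑ _ ∈ I, #A := sum_lt_sum_of_nonempty hIne fun S hS => (hlarge S (hIs hS)).2
        _ ≤ (d + 1) * #A := by rw [sum_const, smul_eq_mul]; gcongr
    obtain ⟨x, -, hx⟩ :=
      exists_mem_forall_mem_of_sum_card_sdiff_lt (Nat.lt_of_mul_lt_mul_left hsum)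
    exact ⟨x, Set.mem_iInter₂.2 fun S hS => subset_convexHull ℝ _ (hx S hS)⟩
  refine ⟨q, fun f c hqc => ?_⟩
  by_contra! hsmall
  have hsplit := card_filter_add_card_filter_not (s := A) (fun x => f x ≤ c)
  have hmem : {x ∈ A | ¬f x ≤ c} ∈ s :=
    mem_filter.2 ⟨mem_powerset.2 (filter_subset _ _), by nlinarith⟩
  have : c < f q := convexHull_min (fun x hx => not_le.1 (mem_filter.1 hx).2)
    (convex_halfSpace_gt f.isLinear c) (Set.mem_iInter₂.1 hq _ hmem)
  exact this.not_ge hqc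

theorem collinear_of_forall_apply_eq {K V : Type*} [Field K] [AddCommGroup V] [Module K V]
    [FiniteDimensional K V] (hV : Module.finrank K V ≤ 2) {f : V →ₗ[K] K} (hf : f ≠ 0)
    {s : Set V} {c : K} (hs : ∀ x ∈ s, f x = c) : Collinear K s := by
  have hspan : vectorSpan K s ≤ LinearMap.ker f := by
    rw [vectorSpan_def, Submodule.span_le]
    rintro _ ⟨x, hx, y, hy, rfl⟩
    simp [hs x hx, hs y hy]
  have hrange : 0 < Module.finrank K (LinearMap.range f) :=
    Nat.pos_of_ne_zero fun h => hf (LinearMap.range_eq_bot.1 (Submodule.finrank_eq_zero.1 h))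
  have := f.finrank_range_add_finrank_ker
  rw [collinear_iff_finrank_le_one]
  have := Submodule.finrank_mono hspan
  omega

theorem exists_ne_zero_apply_eq {K V : Type*} [Field K] [AddCommGroup V] [Module K V]
    (hV : 1 < Module.finrank K V) (p q : V) : ∃ f : V →ₗ[K] K, f ≠ 0 ∧ f p = f q := by
  obtain ⟨f, hf, hker⟩ := (K ∙ (q - p)).exists_le_ker_of_lt_top
    (Submodule.lt_top_of_finrank_lt_finrank <| (finrank_span_le_card {q - p}).trans_lt <| by simpa)
  refine ⟨f, hf, ?_⟩
  have := hker (Submodule.mem_span_singleton_self (q - p))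
  rw [LinearMap.mem_ker, map_sub, sub_eq_zero] at this
  exact this.symm

theorem InGeneralPosition.mono {S T : Set (ℝ × ℝ)} (h : InGeneralPosition S) (hTS : T ⊆ S) :
    InGeneralPosition T := fun p hp q hq r hr => h p (hTS hp) q (hTS hq) r (hTS hr)

theorem InGeneralPosition.card_le_card_filter_lt_add_card_filter_gt {X : Finset (ℝ × ℝ)}
    (hX : InGeneralPosition (X : Set (ℝ × ℝ))) {f : ℝ × ℝ →ₗ[ℝ] ℝ} (hf : f ≠ 0) (c : ℝ) :
    #X ≤ #{x ∈ X | f x < c} + #{x ∈ X | c < f x} + 2 := by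
  have hline : #{x ∈ X | f x = c} ≤ 2 := by
    by_contra! h
    obtain ⟨p, hp, q, hq, r, hr, hpq, hpr, hqr⟩ := two_lt_card.1 h
    simp only [mem_filter] at hp hq hr
    refine hX p hp.1 q hq.1 r hr.1 hpq hpr hqr
      (collinear_of_forall_apply_eq (c := c) (by simp) hf ?_)
    simp [hp.2, hq.2, hr.2]
  calc #X ≤ #({x ∈ X | f x < c} ∪ {x ∈ X | c < f x} ∪ {x ∈ X | f x = c}) := by
        refine card_le_card fun x hx => ?_
        simp only [mem_union, mem_filter, hx, true_and]
        rcases lt_trichotomy (f x) c with h | h | h <;> simp [h]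
    _ ≤ _ := (card_union_le _ _).trans (add_le_add (card_union_le _ _) hline)

theorem InGeneralPosition.exists_strict_centerpoint {A : Finset (ℝ × ℝ)}
    (hA : InGeneralPosition (A : Set (ℝ × ℝ))) :
    ∃ q : ℝ × ℝ, ∀ f : ℝ × ℝ →ₗ[ℝ] ℝ, f ≠ 0 →
      #A ≤ 3 * #{x ∈ A | f x < f q} + 6 ∧ #A ≤ 3 * #{x ∈ A | f q < f x} + 6 := by
  obtain ⟨q, hq⟩ := exists_centerpoint A
  have below : ∀ f : ℝ × ℝ →ₗ[ℝ] ℝ, f ≠ 0 → #A ≤ 3 * #{x ∈ A | f x < f q} + 6 := by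
    intro f hf
    have hclosed : #A ≤ 3 * #{x ∈ A | f x ≤ f q} := by simpa using hq f (f q) le_rfl
    have hsplit := card_filter_add_card_filter_not (s := A) (fun x => f q < f x)
    simp only [not_lt] at hsplit
    have := hA.card_le_card_filter_lt_add_card_filter_gt hf (f q)
    omega
  refine ⟨q, fun f hf => ⟨below f hf, ?_⟩⟩
  simpa only [LinearMap.neg_apply, neg_lt_neg_iff] using below (-f) (neg_ne_zero.2 hf)

theorem InGeneralPosition.exists_line_separating_thirds {A B C : Finset (ℝ × ℝ)}
    (hA : InGeneralPosition (A : Set (ℝ × ℝ))) (hB : InGeneralPosition (B : Set (ℝ × ℝ)))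
    (hC : InGeneralPosition (C : Set (ℝ × ℝ))) :
    ∃ (f : ℝ × ℝ →ₗ[ℝ] ℝ) (c : ℝ), #A ≤ 3 * #{x ∈ A | f x < c} + 6 ∧
      #B ≤ 3 * #{x ∈ B | c < f x} + 6 ∧ #C ≤ 3 * #{x ∈ C | c < f x} + 6 := by
  obtain ⟨qA, hqA⟩ := hA.exists_strict_centerpoint
  obtain ⟨qB, hqB⟩ := hB.exists_strict_centerpoint
  obtain ⟨f, hf, hfq, hCf⟩ : ∃ f : ℝ × ℝ →ₗ[ℝ] ℝ, f ≠ 0 ∧ f qA = f qB ∧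
      #{x ∈ C | f x < f qA} ≤ #{x ∈ C | f qA < f x} := by
    obtain ⟨f, hf, hfq⟩ := exists_ne_zero_apply_eq (K := ℝ) (by simp) qA qB
    rcases le_total #{x ∈ C | f x < f qA} #{x ∈ C | f qA < f x} with hCf | hCf
    · exact ⟨f, hf, hfq, hCf⟩
    · exact ⟨-f, neg_ne_zero.2 hf, by simp [hfq],
        by simpa only [LinearMap.neg_apply, neg_lt_neg_iff] using hCf⟩
  have := hC.card_le_card_filter_lt_add_card_filter_gt hf (f qA)
  exact ⟨f, f qA, (hqA f hf).1, hfq ▸ (hqB f hf).2, by omega⟩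

theorem InGeneralPosition.exists_subfamily_separated_triple {ι : Type*} [DecidableEq ι]
    {P : Finset (ℝ × ℝ)} (hP : InGeneralPosition (P : Set (ℝ × ℝ)))
    {Q : ι → Finset (ℝ × ℝ)} (hQ : ∀ m, Q m ⊆ P) (i j l : ι) :
    ∃ Q' : ι → Finset (ℝ × ℝ), (∀ m, Q' m ⊆ Q m) ∧
      (i ≠ j → i ≠ l → StrictlySeparated (Q' i : Set (ℝ × ℝ)) (↑(Q' j) ∪ ↑(Q' l))) ∧
      ∀ m, #(Q m) ≤ 3 * #(Q' m) + 6 := by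
  by_cases hijl : i = j ∨ i = l
  · exact ⟨Q, fun _ => subset_rfl, fun hij hil => (hijl.elim hij hil).elim, fun _ => by omega⟩
  rw [not_or] at hijl
  obtain ⟨f, c, hi, hj, hl⟩ :=
    (hP.mono (hQ i)).exists_line_separating_thirds (hP.mono (hQ j)) (hP.mono (hQ l))
  let Q' : ι → Finset (ℝ × ℝ) := fun m =>
    if m = i then {x ∈ Q m | f x < c} else if m = j ∨ m = l then {x ∈ Q m | c < f x} else Q m
  refine ⟨Q', fun m => ?_, fun _ _ => ⟨f, c, fun x hx => ?_, fun x hx => ?_⟩, fun m => ?_⟩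
  · dsimp only [Q']
    split_ifs <;> simp
  · simp_all [Q']
  · simp [Q', Ne.symm hijl.1, Ne.symm hijl.2] at hx
    exact hx.elim And.right And.right
  · dsimp only [Q']
    split_ifs with h1 h2
    · exact h1 ▸ hi
    · rcases h2 with rfl | rfl
      exacts [hj, hl]
    · omega

theorem InGeneralPosition.exists_subfamily_separated {ι : Type*} [DecidableEq ι]
    {P : Finset (ℝ × ℝ)} (hP : InGeneralPosition (P : Set (ℝ × ℝ))) (T : Finset (ι × ι × ι))
    {Q : ι → Finset (ℝ × ℝ)} (hQ : ∀ m, Q m ⊆ P) :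
    ∃ Q' : ι → Finset (ℝ × ℝ), (∀ m, Q' m ⊆ Q m) ∧
      (∀ t ∈ T, t.1 ≠ t.2.1 → t.1 ≠ t.2.2 →
        StrictlySeparated (Q' t.1 : Set (ℝ × ℝ)) (↑(Q' t.2.1) ∪ ↑(Q' t.2.2))) ∧
      ∀ m, #(Q m) + 3 ≤ 3 ^ #T * (#(Q' m) + 3) := by
  induction T using Finset.induction_on generalizing Q with
  | empty => exact ⟨Q, fun _ => subset_rfl, by simp, by simp⟩
  | insert t T ht ih =>
    obtain ⟨Q₁, hQ₁Q, hsep₁, hcard₁⟩ := ih hQ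
    obtain ⟨Q', hQ'Q₁, hsep', hcard'⟩ :=
      hP.exists_subfamily_separated_triple (fun m => (hQ₁Q m).trans (hQ m)) t.1 t.2.1 t.2.2
    refine ⟨Q', fun m => (hQ'Q₁ m).trans (hQ₁Q m), fun s hs hs₁ hs₂ => ?_, fun m => ?_⟩
    · rcases mem_insert.1 hs with rfl | hs
      · exact hsep' hs₁ hs₂
      · exact (hsep₁ s hs hs₁ hs₂).mono (coe_subset.2 (hQ'Q₁ _))
          (Set.union_subset_union (coe_subset.2 (hQ'Q₁ _)) (coe_subset.2 (hQ'Q₁ _)))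
    · rw [card_insert_of_notMem ht, pow_succ, mul_assoc]
      exact (hcard₁ m).trans (Nat.mul_le_mul_left _ (by have := hcard' m; omega))

def orientDet (p q r : ℝ × ℝ) : ℝ :=
  (q.1 - p.1) * (r.2 - p.2) - (q.2 - p.2) * (r.1 - p.1)

theorem orient_eq_sign_orientDet (p q r : ℝ × ℝ) : orient p q r = Real.sign (orientDet p q r) :=
  rfl

theorem collinear_of_orientDet_eq_zero {p q r : ℝ × ℝ} (h : orientDet p q r = 0) :
    Collinear ℝ ({p, q, r} : Set (ℝ × ℝ)) := by
  rcases eq_or_ne p q with rfl | hpq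
  · simpa using collinear_pair ℝ p r
  let f : ℝ × ℝ →ₗ[ℝ] ℝ := (q.2 - p.2) • LinearMap.fst ℝ ℝ ℝ - (q.1 - p.1) • LinearMap.snd ℝ ℝ ℝ
  have hf : f ≠ 0 := fun hf => hpq <| by
    have h₁ := LinearMap.congr_fun hf (1, 0)
    have h₂ := LinearMap.congr_fun hf (0, 1)
    simp [f] at h₁ h₂
    exact Prod.ext (by linarith) (by linarith)
  refine collinear_of_forall_apply_eq (by simp) hf (c := f p) ?_
  simp only [Set.mem_insert_iff, Set.mem_singleton_iff, forall_eq_or_imp, forall_eq, true_and]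
  unfold orientDet at h
  exact ⟨by simp [f]; ring, by simp [f]; linear_combination -h⟩

theorem orientDet_ne_zero_of_separated {A B C : Set (ℝ × ℝ)} (hA : StrictlySeparated A (B ∪ C))
    (hB : StrictlySeparated B (A ∪ C)) (hC : StrictlySeparated C (A ∪ B)) {a b c : ℝ × ℝ}
    (ha : a ∈ A) (hb : b ∈ B) (hc : c ∈ C) : orientDet a b c ≠ 0 := fun h => by
  rcases (collinear_of_orientDet_eq_zero h).wbtw_or_wbtw_or_wbtw with h | h | h
  · exact hB.notMem_segment hb ha hc h.mem_segment
  · exact hC.notMem_segment hc ha hb h.symm.mem_segment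
  · exact hA.notMem_segment ha hb hc h.symm.mem_segment

theorem IsPreconnected.sign_eq {X : Type*} [TopologicalSpace X] {T : Set X}
    (hT : IsPreconnected T) {g : X → ℝ} (hg : ContinuousOn g T) (hg0 : ∀ x ∈ T, g x ≠ 0)
    {x y : X} (hx : x ∈ T) (hy : y ∈ T) : Real.sign (g x) = Real.sign (g y) := by
  have no_change : ∀ {x y}, x ∈ T → y ∈ T → g x < 0 → 0 < g y → False := fun hx hy hgx hgy =>
    let ⟨z, hz, hgz⟩ := hT.intermediate_value hx hy hg ⟨hgx.le, hgy.le⟩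
    hg0 z hz hgz
  rcases (hg0 x hx).lt_or_gt with hgx | hgx <;> rcases (hg0 y hy).lt_or_gt with hgy | hgy
  · rw [Real.sign_of_neg hgx, Real.sign_of_neg hgy]
  · exact (no_change hx hy hgx hgy).elim
  · exact (no_change hy hx hgy hgx).elim
  · rw [Real.sign_of_pos hgx, Real.sign_of_pos hgy]

theorem sameTypeTransversals_of_separated {k : ℕ} {Q : Fin k → Finset (ℝ × ℝ)}
    (h : ∀ i j l, i ≠ j → i ≠ l → StrictlySeparated (Q i : Set (ℝ × ℝ)) (↑(Q j) ∪ ↑(Q l))) :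
    SameTypeTransversals Q := by
  intro f g hf hg i j l hij hjl
  let H m := convexHull ℝ (Q m : Set (ℝ × ℝ))
  have hsep : ∀ a b c, a ≠ b → a ≠ c → StrictlySeparated (H a) (H b ∪ H c) :=
    fun a b c hab hac => (h a b c hab hac).convexHull.mono subset_rfl
      (Set.union_subset (convexHull_mono Set.subset_union_left)
        (convexHull_mono Set.subset_union_right))
  have hT : IsPreconnected (H i ×ˢ H j ×ˢ H l) := by
    have hconv m : Convex ℝ (H m) := convex_convexHull ℝ _
    exact ((hconv i).prod ((hconv j).prod (hconv l))).isPreconnected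
  have hH : ∀ f : Fin k → ℝ × ℝ, (∀ m, f m ∈ Q m) → ∀ m, f m ∈ H m :=
    fun f hf m => subset_convexHull ℝ _ (mem_coe.2 (hf m))
  have hil := hij.trans hjl
  rw [orient_eq_sign_orientDet, orient_eq_sign_orientDet]
  refine hT.sign_eq (g := fun w => orientDet w.1 w.2.1 w.2.2) (x := (f i, f j, f l))
    (y := (g i, g j, g l))
    (by unfold orientDet; fun_prop) (fun w hw => ?_)
    ⟨hH f hf i, hH f hf j, hH f hf l⟩ ⟨hH g hg i, hH g hg j, hH g hg l⟩
  exact orientDet_ne_zero_of_separated (hsep i j l hij.ne hil.ne) (hsep j i l hij.ne' hjl.ne)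
    (hsep l i j hil.ne' hjl.ne') hw.1 hw.2.1 hw.2.2

theorem SameTypeTransversals.mono {k : ℕ} {Q Q' : Fin k → Finset (ℝ × ℝ)}
    (h : SameTypeTransversals Q) (hQ' : ∀ i, Q' i ⊆ Q i) : SameTypeTransversals Q' :=
  fun f g hf hg => h f g (fun i => hQ' i (hf i)) (fun i => hQ' i (hg i))

/-- Below `6 * 3 ^ k ^ 3` points singletons suffice; above it, the additive losses of the
`k ^ 3` separation steps are absorbed. -/
theorem InGeneralPosition.exists_family_sameTypeTransversals {P : Finset (ℝ × ℝ)}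
    (hP : InGeneralPosition (P : Set (ℝ × ℝ))) {k : ℕ} (hkP : k ≤ #P) :
    ∃ Q : Fin k → Finset (ℝ × ℝ), (∀ i, Q i ⊆ P) ∧
      (∀ i j, i ≠ j →
        Disjoint (convexHull ℝ (Q i : Set (ℝ × ℝ))) (convexHull ℝ (Q j : Set (ℝ × ℝ)))) ∧
      SameTypeTransversals Q ∧ ∀ i, #P ≤ 6 * 3 ^ k ^ 3 * #(Q i) := by
  by_cases hsmall : #P < 6 * 3 ^ k ^ 3
  · obtain ⟨e⟩ : Nonempty (Fin k ↪ P) := Function.Embedding.nonempty_of_card_le (by simpa)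
    refine ⟨fun i => {(e i : ℝ × ℝ)}, fun i => singleton_subset_iff.2 (e i).2,
      fun i j hij => ?_, fun f g hf hg i j l _ _ => ?_, fun i => by simpa using hsmall.le⟩
    · simpa using fun h => hij (e.injective (Subtype.ext h))
    · simp only [mem_singleton] at hf hg
      simp only [hf, hg]
  obtain ⟨Q, hQP, hsep, hcard⟩ :=
    hP.exists_subfamily_separated (univ : Finset (Fin k × Fin k × Fin k)) (Q := fun _ => P)
      fun _ => subset_rfl
  have hsep' : ∀ i j l, i ≠ j → i ≠ l → StrictlySeparated (Q i : Set (ℝ × ℝ)) (↑(Q j) ∪ ↑(Q l)) :=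
    fun i j l => hsep (i, j, l) (mem_univ _)
  refine ⟨Q, hQP, fun i j hij => ?_, sameTypeTransversals_of_separated hsep', fun i => ?_⟩
  · exact ((hsep' i j j hij hij).mono subset_rfl Set.subset_union_left).convexHull.disjoint
  · have := hcard i
    rw [card_univ, Fintype.card_prod, Fintype.card_prod, Fintype.card_fin,
      show k * (k * k) = k ^ 3 by ring] at this
    nlinarith

/-- For every `k ≥ 3` there is a constant `c(k) > 0` such that every finite point set `P` in
general position with `|P| ≥ k` contains `k` subsets `P 1, …, P k` with pairwise disjoint
convex hulls, all of the same size at least `c(k)·|P|`, having same-type transversals. -/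
theorem same_type_disjoint_hulls :
    ∀ k : ℕ, 3 ≤ k → ∃ ck : ℝ, 0 < ck ∧
      ∀ P : Finset (ℝ × ℝ), InGeneralPosition (P : Set (ℝ × ℝ)) → k ≤ P.card →
        ∃ Q : Fin k → Finset (ℝ × ℝ),
          (∀ i, Q i ⊆ P) ∧
          (∀ i j, i ≠ j →
            Disjoint (convexHull ℝ (Q i : Set (ℝ × ℝ))) (convexHull ℝ (Q j : Set (ℝ × ℝ)))) ∧
          (∀ i j, (Q i).card = (Q j).card) ∧
          (∀ i, ck * (P.card : ℝ) ≤ ((Q i).card : ℝ)) ∧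
          SameTypeTransversals Q := by
  intro k hk
  refine ⟨1 / (6 * 3 ^ k ^ 3), by positivity, fun P hP hkP => ?_⟩
  obtain ⟨Q, hQP, hdisj, hsame, hlarge⟩ := hP.exists_family_sameTypeTransversals hkP
  obtain ⟨i₀, -, hi₀⟩ :=
    exists_min_image univ (fun i => #(Q i)) (univ_nonempty_iff.2 ⟨⟨0, by omega⟩⟩)
  choose Q' hQ'Q hQ'card using fun i => exists_subset_card_eq (hi₀ i (mem_univ i))
  refine ⟨Q', fun i => (hQ'Q i).trans (hQP i),
    fun i j hij => (hdisj i j hij).mono (convexHull_mono (hQ'Q i)) (convexHull_mono (hQ'Q j)),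
    fun i j => by rw [hQ'card, hQ'card], fun i => ?_, hsame.mono hQ'Q⟩
  rw [hQ'card, one_div_mul_eq_div, div_le_iff₀ (by positivity), mul_comm]
  exact_mod_cast hlarge i₀
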